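/- Let C₁ be a ground state at field H₁ and let H₂ > H₁. Let C₂ be any spin configuration that has at least one reverse-flipped spin relative to C₁, i.e., there exists a site i with C₁ i = 1 and C₂ i = -1. Then the configuration C̃ = C₁ ∨ C₂ (pointwise maximum) satisfies E(C̃, H₂) < E(C₂, H₂); in particular C₂ is not a ground state at H₂. -/

import Mathlib

/-!
The energy is submodular, `E (σ ∨ τ) + E (σ ∧ τ) ≤ E σ + E τ`: for `J ≥ 0` each bond term obeys
the two-term rearrangement inequality, and the field term is modular since `max + min = id + id`.
Now `C₁ ∧ C₂ ≤ C₁` with strict inequality at the reverse-flipped site, so `C₁ ∧ C₂` has the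
smaller magnetization. As `E (·, H) = E₀ - H * M`, raising the field from `H₁` to `H₂` turns the
ground-state inequality `E C₁ ≤ E (C₁ ∧ C₂)` into a strict one, and submodularity hands this
strict gain over to `C₁ ∨ C₂` against `C₂`.
-/

open Finset

section RFIM

variable {V : Type*} [Fintype V] [Nonempty V] [DecidableEq V]
variable (G : SimpleGraph V) [DecidableRel G.Adj]
variable (J : ℝ) (h : V → ℝ)

/-- A spin configuration: every spin is `-1` or `+1`. -/
def IsSpin (σ : V → ℤ) : Prop := ∀ i, σ i = -1 ∨ σ i = 1

/-- The product of the two spins at the endpoints of an (unordered) edge. -/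
noncomputable def pairProd (σ : V → ℤ) : Sym2 V → ℝ :=
  Sym2.lift ⟨fun i j => (σ i : ℝ) * (σ j : ℝ), fun i j => by ring⟩

/-- Energy of configuration `σ` at external field `H`. -/
noncomputable def E (σ : V → ℤ) (H : ℝ) : ℝ :=
  -J * (∑ e ∈ G.edgeFinset, pairProd σ e) - ∑ i, (H + h i) * (σ i : ℝ)

/-- Magnetization. -/
noncomputable def M (σ : V → ℤ) : ℝ := ∑ i, (σ i : ℝ)

/-- Energy at zero field. -/
noncomputable def E₀ (σ : V → ℤ) : ℝ := E G J h σ 0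

/-- `σ` is a ground state at field `H`. -/
def IsGroundState (H : ℝ) (σ : V → ℤ) : Prop :=
  IsSpin σ ∧ ∀ τ : V → ℤ, IsSpin τ → E G J h σ H ≤ E G J h τ H

section

omit [Nonempty V] [DecidableEq V]

theorem mul_add_mul_le_max_mul_max_add_min_mul_min {R : Type*} [CommRing R] [LinearOrder R]
    [IsStrictOrderedRing R] (a b c d : R) :
    a * b + c * d ≤ max a c * max b d + min a c * min b d := by
  rcases le_total a c with hac | hca <;> rcases le_total b d with hbd | hdb
  · simp only [max_eq_right hac, min_eq_left hac, max_eq_right hbd, min_eq_left hbd]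
    linarith
  · simp only [max_eq_right hac, min_eq_left hac, max_eq_left hdb, min_eq_right hdb]
    nlinarith [mul_nonneg (sub_nonneg.2 hac) (sub_nonneg.2 hdb)]
  · simp only [max_eq_left hca, min_eq_right hca, max_eq_right hbd, min_eq_left hbd]
    nlinarith [mul_nonneg (sub_nonneg.2 hca) (sub_nonneg.2 hbd)]
  · simp only [max_eq_left hca, min_eq_right hca, max_eq_left hdb, min_eq_right hdb]
    linarith

namespace IsSpin

omit [Fintype V]

variable {σ τ : V → ℤ}

theorem max (hσ : IsSpin σ) (hτ : IsSpin τ) : IsSpin fun i => max (σ i) (τ i) := fun i => by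
  rcases hσ i with h | h <;> rcases hτ i with h' | h' <;> simp [h, h']

theorem min (hσ : IsSpin σ) (hτ : IsSpin τ) : IsSpin fun i => min (σ i) (τ i) := fun i => by
  rcases hσ i with h | h <;> rcases hτ i with h' | h' <;> simp [h, h']

end IsSpin

omit [Fintype V] in
theorem pairProd_add_pairProd_le (σ τ : V → ℤ) (e : Sym2 V) :
    pairProd σ e + pairProd τ e ≤
      pairProd (fun i => max (σ i) (τ i)) e + pairProd (fun i => min (σ i) (τ i)) e := by
  induction e using Sym2.ind with
  | _ i j =>
    simp only [pairProd, Sym2.lift_mk, Int.cast_max, Int.cast_min]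
    exact mul_add_mul_le_max_mul_max_add_min_mul_min _ _ _ _

theorem E_max_add_E_min_le {J : ℝ} (hJ : 0 ≤ J) (σ τ : V → ℤ) (H : ℝ) :
    E G J h (fun i => max (σ i) (τ i)) H + E G J h (fun i => min (σ i) (τ i)) H ≤
      E G J h σ H + E G J h τ H := by
  have hbond : ∑ e ∈ G.edgeFinset, pairProd σ e + ∑ e ∈ G.edgeFinset, pairProd τ e ≤
      ∑ e ∈ G.edgeFinset, pairProd (fun i => max (σ i) (τ i)) e +
        ∑ e ∈ G.edgeFinset, pairProd (fun i => min (σ i) (τ i)) e := by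
    simp only [← sum_add_distrib]
    exact sum_le_sum fun e _ => pairProd_add_pairProd_le σ τ e
  have hfield : ∑ i, (H + h i) * ((max (σ i) (τ i) : ℤ) : ℝ) +
      ∑ i, (H + h i) * ((min (σ i) (τ i) : ℤ) : ℝ) =
      ∑ i, (H + h i) * (σ i : ℝ) + ∑ i, (H + h i) * (τ i : ℝ) := by
    simp only [← sum_add_distrib, ← mul_add, Int.cast_max, Int.cast_min, max_add_min]
  have := mul_le_mul_of_nonneg_left hbond hJ
  unfold E
  linarith

theorem E_eq_E₀_sub_mul_M (σ : V → ℤ) (H : ℝ) : E G J h σ H = E₀ G J h σ - H * M σ := by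
  have hfield : ∑ i, (H + h i) * (σ i : ℝ) = ∑ i, h i * (σ i : ℝ) + H * ∑ i, (σ i : ℝ) := by
    rw [mul_sum, ← sum_add_distrib]
    exact sum_congr rfl fun i _ => by ring
  simp only [E₀, E, M, hfield, zero_add]
  ring

theorem E_lt_E_of_le_of_M_lt {σ τ : V → ℤ} {H₁ H₂ : ℝ} (hE : E G J h σ H₁ ≤ E G J h τ H₁)
    (hM : M τ < M σ) (hH : H₁ < H₂) : E G J h σ H₂ < E G J h τ H₂ := by
  simp only [E_eq_E₀_sub_mul_M] at hE ⊢
  nlinarith [mul_pos (sub_pos.2 hH) (sub_pos.2 hM)]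

theorem M_lt_M_of_le_of_exists_lt {σ τ : V → ℤ} (hle : ∀ i, σ i ≤ τ i)
    (hlt : ∃ i, σ i < τ i) : M σ < M τ :=
  sum_lt_sum (fun i _ => Int.cast_le.2 (hle i))
    (hlt.imp fun i hi => ⟨mem_univ i, Int.cast_lt.2 hi⟩)

end

/-- Any configuration with a reverse-flipped spin relative to a ground state at a
lower field is strictly beaten, at the higher field, by the pointwise maximum;
in particular it is not a ground state there. -/
theorem reverse_flip_not_ground_state
    (hJ : 0 < J) (H₁ H₂ : ℝ) (C₁ C₂ : V → ℤ)
    (h₁ : IsGroundState G J h H₁ C₁) (h₂ : IsSpin C₂)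
    (hH : H₁ < H₂) (hrev : ∃ i, C₁ i = 1 ∧ C₂ i = -1) :
    E G J h (fun i => max (C₁ i) (C₂ i)) H₂ < E G J h C₂ H₂ ∧
      ¬ IsGroundState G J h H₂ C₂ := by
  obtain ⟨hC₁, hC₁_min⟩ := h₁
  have hM : M (fun i => min (C₁ i) (C₂ i)) < M C₁ :=
    M_lt_M_of_le_of_exists_lt (fun i => min_le_left _ _)
      (hrev.imp fun i ⟨h1, h2⟩ => by simp [h1, h2])
  have hmin : E G J h C₁ H₂ < E G J h (fun i => min (C₁ i) (C₂ i)) H₂ :=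
    E_lt_E_of_le_of_M_lt G J h (hC₁_min _ (hC₁.min h₂)) hM hH
  have hmax : E G J h (fun i => max (C₁ i) (C₂ i)) H₂ < E G J h C₂ H₂ := by
    linarith [E_max_add_E_min_le G h hJ.le C₁ C₂ H₂]
  exact ⟨hmax, fun hC₂ => (hC₂.2 _ (hC₁.max h₂)).not_gt hmax⟩

end RFIM
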